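/- Let X = X₁ ∪ X₂ with S = X₁ ∩ X₂, let K be a reproducing kernel on X with realization (H, φ), and for A ⊆ X let Π_A denote the orthogonal projection of H onto the closed linear span of {φ x : x ∈ A}. Suppose Π_S = Π_{X₁} ∘ Π_{X₂} = Π_{X₂} ∘ Π_{X₁} (i.e., K is the canonical completion of its restriction to (X₁ × X₁) ∪ (X₂ × X₂)). Then for every set S' with S ⊆ S' ⊆ X and all x ∈ X₁, y ∈ X₂, one has K(x,y) = ⟪Π_{S'}(φ x), Π_{S'}(φ y)⟫. (This is the separation property: any separator S' of x and y in the graph (X₁ × X₁) ∪ (X₂ × X₂) contains S, and K(x,y) = ⟨k_{x,S'}, k_{y,S'}⟩.) -/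

import Mathlib

open scoped RealInnerProductSpace

/-- A reproducing kernel on a set `X`. -/
def IsKernel {X : Type*} (K : X → X → ℝ) : Prop :=
  (∀ x y, K x y = K y x) ∧
  ∀ (n : ℕ) (α : Fin n → ℝ) (x : Fin n → X),
    0 ≤ ∑ i, ∑ j, α i * α j * K (x i) (x j)

/-- The orthogonal projection of `H` onto the closed linear span of `{φ x : x ∈ A}`, as a
continuous linear endomorphism of `H`. -/
noncomputable def spanProj {X H : Type*} [NormedAddCommGroup H]
    [InnerProductSpace ℝ H] [CompleteSpace H] (φ : X → H) (A : Set X) :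
    H →L[ℝ] H :=
  letI U : Submodule ℝ H := (Submodule.span ℝ (φ '' A)).topologicalClosure
  haveI : CompleteSpace U :=
    IsClosed.completeSpace_coe (hs := Submodule.isClosed_topologicalClosure _)
  U.subtypeL.comp (U.orthogonalProjectionOnto)

/-!
Write `M_A` for the closed span of `φ '' A` and `P_A` for the projection onto it, `S = X₁ ∩ X₂`.
If `P_S = P_{X₁} P_{X₂}`, then every `b ∈ M_{X₂}` orthogonal to `M_S` is orthogonal to `M_{X₁}`,
since `P_{X₁} b = P_{X₁} P_{X₂} b = P_S b = 0`; symmetrically with `X₁` and `X₂` swapped.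
For `v ∈ M_{X₂}` the residual `v - P_{S' ∩ X₂} v` is therefore orthogonal to `φ s` for all
`s ∈ S' ⊆ X₁ ∪ X₂`, so `P_{S'}` maps `M_{X₂}` into itself. Finally split
`φ x = P_S (φ x) + a`: the first part lies in `M_{S'}` and `a ∈ M_{X₁} ⊖ M_S` is orthogonal to
`M_{X₂}`, so both are orthogonal to `φ y - P_{S'} (φ y) ∈ M_{X₂}`, and
`K x y = ⟪φ x, P_{S'} (φ y)⟫ = ⟪P_{S'} (φ x), P_{S'} (φ y)⟫`.
-/

open scoped InnerProductSpace
open Submodule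

namespace Submodule

variable {𝕜 E : Type*} [RCLike 𝕜] [NormedAddCommGroup E] [InnerProductSpace 𝕜 E]

theorem mem_orthogonal_span_iff {s : Set E} {v : E} :
    v ∈ (span 𝕜 s)ᗮ ↔ ∀ u ∈ s, ⟪u, v⟫_𝕜 = 0 := by
  refine ⟨fun h u hu => h u (subset_span hu), fun h => (mem_orthogonal _ _).2 fun u hu => ?_⟩
  induction hu using span_induction with
  | mem u hu => exact h u hu
  | zero => exact inner_zero_left _
  | add u w _ _ hu hw => rw [inner_add_left, hu, hw, add_zero]
  | smul a u _ hu => rw [inner_smul_left, hu, mul_zero]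

theorem inf_orthogonal_le_orthogonal_of_starProjection_eq_comp {U V W : Submodule 𝕜 E}
    [U.HasOrthogonalProjection] [V.HasOrthogonalProjection] [W.HasOrthogonalProjection]
    (h : W.starProjection = U.starProjection ∘L V.starProjection) : V ⊓ Wᗮ ≤ Uᗮ := by
  intro b hb
  obtain ⟨hbV, hbW⟩ := mem_inf.1 hb
  rw [← starProjection_apply_eq_zero_iff] at hbW ⊢
  calc U.starProjection b = U.starProjection (V.starProjection b) := by
        rw [starProjection_eq_self_iff.2 hbV]
    _ = W.starProjection b := by rw [h]; rfl
    _ = 0 := hbW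

theorem inner_starProjection_starProjection_eq_inner {W M₁ M₂ M' : Submodule 𝕜 E}
    [W.HasOrthogonalProjection] [M'.HasOrthogonalProjection]
    (hperp : M₁ ⊓ Wᗮ ≤ M₂ᗮ) (hW₁ : W ≤ M₁) (hW' : W ≤ M') {x y : E} (hx : x ∈ M₁)
    (hy : y ∈ M₂) (hy' : M'.starProjection y ∈ M₂) :
    ⟪M'.starProjection x, M'.starProjection y⟫_𝕜 = ⟪x, y⟫_𝕜 := by
  have hxW : x - W.starProjection x ∈ M₂ᗮ :=
    hperp ⟨sub_mem hx (hW₁ (starProjection_apply_mem W x)), sub_starProjection_mem_orthogonal x⟩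
  have hyM' : y - M'.starProjection y ∈ M'ᗮ := sub_starProjection_mem_orthogonal y
  have hx_perp : ⟪x, y - M'.starProjection y⟫_𝕜 = 0 := by
    rw [← sub_add_cancel x (W.starProjection x), inner_add_left,
      hyM' _ (hW' (starProjection_apply_mem W x)),
      (mem_orthogonal' _ _).1 hxW _ (sub_mem hy hy'), add_zero]
  rw [inner_sub_right, sub_eq_zero] at hx_perp
  rw [inner_starProjection_left_eq_right,
    starProjection_eq_self_iff.2 (starProjection_apply_mem _ y), hx_perp]

end Submodule

section ClosedSpan

variable {X H : Type*} [NormedAddCommGroup H] [InnerProductSpace ℝ H] (φ : X → H)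

noncomputable def closedSpan (A : Set X) : Submodule ℝ H :=
  (span ℝ (φ '' A)).topologicalClosure

variable {φ}

theorem closedSpan_mono {A B : Set X} (h : A ⊆ B) : closedSpan φ A ≤ closedSpan φ B :=
  topologicalClosure_mono (span_mono (Set.image_mono h))

theorem apply_mem_closedSpan {A : Set X} {x : X} (hx : x ∈ A) : φ x ∈ closedSpan φ A :=
  le_topologicalClosure _ (subset_span (Set.mem_image_of_mem φ hx))

theorem mem_closedSpan_orthogonal_iff {A : Set X} {v : H} :
    v ∈ (closedSpan φ A)ᗮ ↔ ∀ s ∈ A, ⟪φ s, v⟫ = 0 := by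
  rw [closedSpan, orthogonal_closure, mem_orthogonal_span_iff, Set.forall_mem_image]

variable [CompleteSpace H]

instance (A : Set X) : CompleteSpace (closedSpan φ A) :=
  IsClosed.completeSpace_coe (hs := isClosed_topologicalClosure _)

theorem spanProj_eq_starProjection (A : Set X) :
    spanProj φ A = (closedSpan φ A).starProjection :=
  rfl

theorem starProjection_closedSpan_eq_inter {X₁ X₂ S' : Set X} (hS' : S' ⊆ X₁ ∪ X₂)
    (hS : X₁ ∩ X₂ ⊆ S')
    (hperp : closedSpan φ X₂ ⊓ (closedSpan φ (X₁ ∩ X₂))ᗮ ≤ (closedSpan φ X₁)ᗮ)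
    {v : H} (hv : v ∈ closedSpan φ X₂) :
    (closedSpan φ S').starProjection v = (closedSpan φ (S' ∩ X₂)).starProjection v := by
  set T := closedSpan φ (S' ∩ X₂)
  have hres : v - T.starProjection v ∈ Tᗮ := sub_starProjection_mem_orthogonal v
  refine eq_starProjection_of_mem_orthogonal
    (closedSpan_mono Set.inter_subset_left (starProjection_apply_mem T v))
    (mem_closedSpan_orthogonal_iff.2 fun s hs => ?_)
  rcases hS' hs with hs₁ | hs₂
  · have hST : X₁ ∩ X₂ ⊆ S' ∩ X₂ := fun t ht => ⟨hS ht, ht.2⟩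
    have hres₁ : v - T.starProjection v ∈ (closedSpan φ X₁)ᗮ := hperp <| mem_inf.2
      ⟨sub_mem hv (closedSpan_mono Set.inter_subset_right (starProjection_apply_mem T v)),
        orthogonal_le (closedSpan_mono hST) hres⟩
    exact hres₁ _ (apply_mem_closedSpan hs₁)
  · exact hres _ (apply_mem_closedSpan ⟨hs, hs₂⟩)

theorem starProjection_closedSpan_mem {X₁ X₂ S' : Set X} (hS' : S' ⊆ X₁ ∪ X₂)
    (hS : X₁ ∩ X₂ ⊆ S')
    (hperp : closedSpan φ X₂ ⊓ (closedSpan φ (X₁ ∩ X₂))ᗮ ≤ (closedSpan φ X₁)ᗮ)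
    {v : H} (hv : v ∈ closedSpan φ X₂) :
    (closedSpan φ S').starProjection v ∈ closedSpan φ X₂ := by
  rw [starProjection_closedSpan_eq_inter hS' hS hperp hv]
  exact closedSpan_mono Set.inter_subset_right (starProjection_apply_mem _ v)

end ClosedSpan

theorem canonical_completion_separation_general {X H : Type*}
    [NormedAddCommGroup H] [InnerProductSpace ℝ H] [CompleteSpace H]
    (X₁ X₂ : Set X) (hcover : X₁ ∪ X₂ = Set.univ)
    (K : X → X → ℝ)
    (φ : X → H) (hφ : ∀ s t, ⟪φ s, φ t⟫ = K s t)
    (hcanon₁ : spanProj φ (X₁ ∩ X₂) = (spanProj φ X₁).comp (spanProj φ X₂))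
    (hcanon₂ : spanProj φ (X₁ ∩ X₂) = (spanProj φ X₂).comp (spanProj φ X₁)) :
    ∀ S' : Set X, X₁ ∩ X₂ ⊆ S' →
      ∀ x ∈ X₁, ∀ y ∈ X₂,
        K x y = ⟪spanProj φ S' (φ x), spanProj φ S' (φ y)⟫ := by
  intro S' hS x hx y hy
  have hperp₁ := inf_orthogonal_le_orthogonal_of_starProjection_eq_comp hcanon₁
  have hperp₂ := inf_orthogonal_le_orthogonal_of_starProjection_eq_comp hcanon₂
  have hS' : S' ⊆ X₁ ∪ X₂ := hcover ▸ Set.subset_univ S'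
  rw [← hφ, spanProj_eq_starProjection,
    inner_starProjection_starProjection_eq_inner hperp₂ (closedSpan_mono Set.inter_subset_left)
      (closedSpan_mono hS) (apply_mem_closedSpan hx) (apply_mem_closedSpan hy)
      (starProjection_closedSpan_mem hS' hS hperp₁ (apply_mem_closedSpan hy))]

/-- Separation property of the canonical completion: if
`Π_S = Π_{X₁} Π_{X₂} = Π_{X₂} Π_{X₁}` for `S = X₁ ∩ X₂`, then for every `S'` with
`S ⊆ S' ⊆ X` and all `x ∈ X₁`, `y ∈ X₂`, `K(x,y) = ⟪Π_{S'} (φ x), Π_{S'} (φ y)⟫`. -/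
theorem canonical_completion_separation {X H : Type*}
    [NormedAddCommGroup H] [InnerProductSpace ℝ H] [CompleteSpace H]
    (X₁ X₂ : Set X) (hcover : X₁ ∪ X₂ = Set.univ)
    (K : X → X → ℝ) (hK : IsKernel K)
    (φ : X → H) (hφ : ∀ s t, ⟪φ s, φ t⟫ = K s t)
    (hd : Dense (Submodule.span ℝ (Set.range φ) : Set H))
    (hcanon₁ : spanProj φ (X₁ ∩ X₂) = (spanProj φ X₁).comp (spanProj φ X₂))
    (hcanon₂ : spanProj φ (X₁ ∩ X₂) = (spanProj φ X₂).comp (spanProj φ X₁)) :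
    ∀ S' : Set X, X₁ ∩ X₂ ⊆ S' →
      ∀ x ∈ X₁, ∀ y ∈ X₂,
        K x y = ⟪spanProj φ S' (φ x), spanProj φ S' (φ y)⟫ :=
  canonical_completion_separation_general X₁ X₂ hcover K φ hφ hcanon₁ hcanon₂
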